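/- arXiv:2205.04341 — 2 statements merged into one kernel-verified Lean document; each statement's English description precedes it below -/
import Mathlib

section
/- Let A be a real symmetric negative semi-definite n×n matrix with kernel span(1), and let α ∈ ℝⁿ with 1ᵀα ≠ 0. Define P = I − (1αᵀ)/(1ᵀα) and let X = P·(−A)†·Pᵀ. Then X is a reflexive generalized inverse of −A, i.e., (−A)X(−A) = −A and X(−A)X = X. -/
open Matrix

theorem reflexive_generalized_inverse_of_projection {n : ℕ}
    (A Adag : Matrix (Fin n) (Fin n) ℝ) (hA : A.IsSymm)
    (hNSD : (-A).PosSemidef)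
    (hker : ∀ x : Fin n → ℝ, A.mulVec x = 0 ↔ ∃ c : ℝ, x = c • (1 : Fin n → ℝ))
    (h1 : (-A) * Adag * (-A) = -A) (h2 : Adag * (-A) * Adag = Adag)
    (h3 : ((-A) * Adag)ᵀ = (-A) * Adag) (h4 : (Adag * (-A))ᵀ = Adag * (-A))
    (α : Fin n → ℝ) (hα : (∑ i, α i) ≠ 0)
    (P : Matrix (Fin n) (Fin n) ℝ)
    (hP : P = 1 - ((∑ i, α i)⁻¹) • Matrix.vecMulVec (fun _ => 1) α)
    (X : Matrix (Fin n) (Fin n) ℝ) (hX : X = P * Adag * Pᵀ) :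
    (-A) * X * (-A) = -A ∧ X * (-A) * X = X := by
  have hker1 : A.mulVec 1 = 0 := (hker 1).mpr ⟨1, by simp⟩
  have hAone : ∀ i, ∑ k, A i k = 0 := by
    intro i
    have := congrFun hker1 i
    simpa [Matrix.mulVec, dotProduct] using this
  have hAP : (-A) * P = -A := by
    rw [hP, Matrix.mul_sub, Matrix.mul_one, Matrix.mul_smul]
    have : (-A) * Matrix.vecMulVec (fun _ => (1:ℝ)) α = 0 := by
      ext i j
      simp only [Matrix.mul_apply, Matrix.vecMulVec_apply, Matrix.neg_apply,
        Matrix.zero_apply, one_mul]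
      rw [← Finset.sum_mul]
      simp [hAone i]
    rw [this]
    simp
  have hPtA : Pᵀ * (-A) = -A := by
    rw [hP]
    have ht : (Matrix.vecMulVec (fun _ : Fin n => (1:ℝ)) α)ᵀ = Matrix.vecMulVec α (fun _ : Fin n => (1:ℝ)) := by
      ext i j; simp [Matrix.vecMulVec_apply, mul_comm]
    simp only [Matrix.transpose_sub, Matrix.transpose_one, Matrix.transpose_smul, ht]
    rw [Matrix.sub_mul, Matrix.one_mul, Matrix.smul_mul]
    have : Matrix.vecMulVec α (fun _ => (1:ℝ)) * (-A) = 0 := by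
      ext i j
      simp only [Matrix.mul_apply, Matrix.vecMulVec_apply, Matrix.neg_apply,
        Matrix.zero_apply, mul_one]
      rw [← Finset.mul_sum]
      have : ∑ k, A k j = 0 := by
        have := hAone j
        rw [← this]
        exact Finset.sum_congr rfl fun k _ => (congrFun (congrFun hA.symm j) k) ▸ by
          simpa using congrFun (congrFun hA j) k
      simp [this]
    rw [this]
    simp
  constructor
  · calc (-A) * X * (-A) = ((-A) * P) * Adag * (Pᵀ * (-A)) := by
          rw [hX]; simp only [Matrix.mul_assoc]
    _ = (-A) * Adag * (-A) := by rw [hAP, hPtA, Matrix.mul_assoc]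
    _ = -A := h1
  · calc X * (-A) * X = P * (Adag * ((Pᵀ * (-A)) * P) * Adag) * Pᵀ := by
          rw [hX]; simp only [Matrix.mul_assoc]
    _ = P * (Adag * (-A) * Adag) * Pᵀ := by rw [hPtA, hAP]
    _ = X := by rw [h2, hX]
end

section
/- Let α ∈ ℝⁿ with 1ᵀα ≠ 0. Define f_α(w) = log w − ((αᵀ log w)/(1ᵀα))·1 for w ∈ ℝⁿ with all entries positive. Then f_α restricted to {w : all wᵢ > 0, 1ᵀw = 1} is a bijection onto {β ∈ ℝⁿ : αᵀβ = 0}, with inverse β ↦ exp(β)/(1ᵀ exp(β)) (exp applied entrywise). -/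
/-!
`fAlpha α` is the entrywise logarithm followed by the projection along `1` onto the hyperplane
`αᵀβ = 0`; this projection exists because `1ᵀα ≠ 0`. Softmax forgets exactly the component along
`1` that the projection changes, and on the simplex it inverts the logarithm, so it is a left
inverse. Conversely, the logarithm of `softmax β` is `β` shifted by a multiple of `1`, which the
projection removes when `αᵀβ = 0`.
-/

noncomputable def fAlpha {n : ℕ} (α w : Fin n → ℝ) : Fin n → ℝ :=
  (fun i => Real.log (w i)) -
    ((∑ i, α i * Real.log (w i)) / (∑ i, α i)) • (1 : Fin n → ℝ)

open Real Finset

section Softmax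

variable {ι : Type*} [Fintype ι]

noncomputable def softmax (β : ι → ℝ) : ι → ℝ :=
  fun i => exp (β i) / ∑ j, exp (β j)

lemma sum_exp_pos [Nonempty ι] (β : ι → ℝ) : 0 < ∑ j, exp (β j) :=
  sum_pos (fun j _ => exp_pos (β j)) univ_nonempty

lemma softmax_pos [Nonempty ι] (β : ι → ℝ) (i : ι) : 0 < softmax β i :=
  div_pos (exp_pos _) (sum_exp_pos β)

lemma sum_softmax [Nonempty ι] (β : ι → ℝ) : ∑ i, softmax β i = 1 := by
  simp only [softmax, ← sum_div]
  exact div_self (sum_exp_pos β).ne'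

lemma softmax_sub_const (β : ι → ℝ) (c : ℝ) : softmax (fun i => β i - c) = softmax β := by
  funext i
  simp only [softmax, exp_sub, ← sum_div]
  exact div_div_div_cancel_right₀ (exp_ne_zero c) _ _

lemma softmax_log {w : ι → ℝ} (hw : ∀ i, 0 < w i) (hs : ∑ i, w i = 1) :
    softmax (fun i => log (w i)) = w := by
  funext i
  simp only [softmax, exp_log (hw _), hs, div_one]

lemma log_softmax [Nonempty ι] (β : ι → ℝ) (i : ι) :
    log (softmax β i) = β i - log (∑ j, exp (β j)) := by
  rw [softmax, log_div (exp_ne_zero _) (sum_exp_pos β).ne', log_exp]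

end Softmax

section FAlpha

variable {n : ℕ} {α : Fin n → ℝ}

lemma fAlpha_apply (α w : Fin n → ℝ) (i : Fin n) :
    fAlpha α w i = log (w i) - (∑ j, α j * log (w j)) / ∑ j, α j := by
  simp [fAlpha]

lemma sum_mul_fAlpha (hα : ∑ i, α i ≠ 0) (w : Fin n → ℝ) : ∑ i, α i * fAlpha α w i = 0 := by
  simp only [fAlpha_apply, mul_sub, sum_sub_distrib, ← sum_mul]
  rw [mul_div_cancel₀ _ hα, sub_self]

lemma softmax_fAlpha {w : Fin n → ℝ} (hw : ∀ i, 0 < w i) (hs : ∑ i, w i = 1) :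
    softmax (fAlpha α w) = w := by
  simp only [funext (fAlpha_apply α w), softmax_sub_const, softmax_log hw hs]

lemma fAlpha_softmax (hα : ∑ i, α i ≠ 0) {β : Fin n → ℝ} (hβ : ∑ i, α i * β i = 0) :
    fAlpha α (softmax β) = β := by
  funext i
  have : Nonempty (Fin n) := ⟨i⟩
  simp only [fAlpha_apply, log_softmax, mul_sub, sum_sub_distrib, hβ, ← sum_mul]
  field_simp
  ring

end FAlpha

theorem fAlpha_bijection {n : ℕ} (hn : 1 ≤ n)
    (α : Fin n → ℝ) (hα : (∑ i, α i) ≠ 0) :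
    Set.BijOn (fAlpha α)
      {w : Fin n → ℝ | (∀ i, 0 < w i) ∧ (∑ i, w i) = 1}
      {β : Fin n → ℝ | (∑ i, α i * β i) = 0} ∧
    (∀ w ∈ {w : Fin n → ℝ | (∀ i, 0 < w i) ∧ (∑ i, w i) = 1},
      (fun i => Real.exp (fAlpha α w i) / (∑ j, Real.exp (fAlpha α w j))) = w) ∧
    (∀ β ∈ {β : Fin n → ℝ | (∑ i, α i * β i) = 0},
      fAlpha α (fun i => Real.exp (β i) / (∑ j, Real.exp (β j))) = β) := by
  have : Nonempty (Fin n) := ⟨⟨0, hn⟩⟩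
  have left_inv : ∀ w ∈ {w : Fin n → ℝ | (∀ i, 0 < w i) ∧ (∑ i, w i) = 1},
      softmax (fAlpha α w) = w := fun w hw => softmax_fAlpha hw.1 hw.2
  have right_inv : ∀ β ∈ {β : Fin n → ℝ | (∑ i, α i * β i) = 0},
      fAlpha α (softmax β) = β := fun β hβ => fAlpha_softmax hα hβ
  refine ⟨Set.InvOn.bijOn ⟨left_inv, right_inv⟩ (fun w _ => sum_mul_fAlpha hα w)
    (fun β _ => ⟨softmax_pos β, sum_softmax β⟩), left_inv, right_inv⟩
end
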